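/- Let A_j (1 ≤ j ≤ n) be d×d positive definite complex matrices and let s, t satisfy either 1 ≥ t ≥ s > 1/2 or 0 ≤ t ≤ s < 1/2. Then (Σ_{j=1}^n A_j^s) ∘ (Σ_{j=1}^n A_j^{1−s}) + ((t − s)/(s − 1/2)) · ((Σ_{j=1}^n A_j^s) ∘ (Σ_{j=1}^n A_j^{1−s}) − (Σ_{j=1}^n A_j^{1/2}) ∘ (Σ_{j=1}^n A_j^{1/2})) ≤ (Σ_{j=1}^n A_j^t) ∘ (Σ_{j=1}^n A_j^{1−t}), where ∘ is the Hadamard (entrywise) product and ≤ is the Loewner order. -/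

import Mathlib

open Matrix Kronecker
open scoped ComplexOrder

/-- Real power `A^r` of a positive definite matrix, via the (continuous)
functional calculus on selfadjoint matrices. -/
noncomputable def mpow {d : ℕ} (A : Matrix (Fin d) (Fin d) ℂ) (r : ℝ) :
    Matrix (Fin d) (Fin d) ℂ :=
  cfc (fun x : ℝ => x ^ r) A

/-! Diagonalising every `A j` writes `∑ j, A j ^ α = ∑ i, λ i ^ α • u i (u i)ᴴ` with one family
of eigenvalues `λ i > 0` and eigenvectors `u i` serving all exponents `α`. Since
`(u uᴴ) ⊙ (v vᴴ) = (u * v) (u * v)ᴴ`, the difference of the two sides becomes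
`∑ i k, F (λ i) (λ k) • w i k (w i k)ᴴ` with `w i k = w k i`, so it is positive semidefinite as
soon as `F a b + F b a ≥ 0` for all `a, b > 0`. With `r = (t - s) / (s - 1/2) ≥ 0`, i.e.
`t - 1/2 = (1 + r) (s - 1/2)`, and `x = (a / b) ^ (s - 1/2)`, that scalar inequality is
Bernoulli's inequality `(1 + r) x ≤ x ^ (1 + r) + r` applied to `x` and to `1 / x`. -/

section Real
open Real

lemma one_add_mul_exp_le_exp_one_add_mul {r : ℝ} (hr : 0 ≤ r) (u : ℝ) :
    (1 + r) * exp u ≤ exp ((1 + r) * u) + r := by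
  have h := one_add_mul_self_le_rpow_one_add (s := exp u - 1) (by linarith [exp_pos u])
    (p := 1 + r) (by linarith)
  rw [add_sub_cancel, ← exp_mul, mul_comm u] at h
  linarith

lemma rpow_mul_rpow_one_sub_eq {a b : ℝ} (ha : 0 < a) (hb : 0 < b) (α : ℝ) :
    a ^ α * b ^ (1 - α) =
      exp ((log a + log b) / 2) * exp ((α - 1 / 2) * (log a - log b)) := by
  rw [rpow_def_of_pos ha, rpow_def_of_pos hb, ← exp_add, ← exp_add]
  ring_nf

lemma heinz_mean_refinement {a b r s t : ℝ} (ha : 0 < a) (hb : 0 < b) (hr : 0 ≤ r)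
    (hts : t - 1 / 2 = (1 + r) * (s - 1 / 2)) :
    (1 + r) * (a ^ s * b ^ (1 - s) + a ^ (1 - s) * b ^ s) ≤
      a ^ t * b ^ (1 - t) + a ^ (1 - t) * b ^ t +
        2 * r * (a ^ (1 / 2 : ℝ) * b ^ (1 / 2 : ℝ)) := by
  have heinz : ∀ α, a ^ α * b ^ (1 - α) + a ^ (1 - α) * b ^ α =
      exp ((log a + log b) / 2) * exp ((α - 1 / 2) * (log a - log b)) +
        exp ((log a + log b) / 2) * exp (-((α - 1 / 2) * (log a - log b))) := by
    intro α
    have h := rpow_mul_rpow_one_sub_eq ha hb (1 - α)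
    rw [sub_sub_cancel, show 1 - α - 1 / 2 = -(α - 1 / 2) by ring, neg_mul] at h
    rw [rpow_mul_rpow_one_sub_eq ha hb, h]
  have hhalf : a ^ (1 / 2 : ℝ) * b ^ (1 / 2 : ℝ) = exp ((log a + log b) / 2) := by
    convert rpow_mul_rpow_one_sub_eq ha hb (1 / 2) using 3 <;> norm_num
  rw [heinz s, heinz t, hhalf, hts, mul_assoc (1 + r)]
  have hE := (exp_pos ((log a + log b) / 2)).le
  have key := one_add_mul_exp_le_exp_one_add_mul hr ((s - 1 / 2) * (log a - log b))
  have key_neg := one_add_mul_exp_le_exp_one_add_mul hr (-((s - 1 / 2) * (log a - log b)))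
  rw [mul_neg] at key_neg
  linarith [mul_le_mul_of_nonneg_left key hE, mul_le_mul_of_nonneg_left key_neg hE]

end Real

namespace Matrix

variable {n ι 𝕜 : Type*} [RCLike 𝕜]

lemma IsHermitian.cfc_eq_sum_smul_vecMulVec [Fintype n] [DecidableEq n]
    {A : Matrix n n 𝕜} (hA : A.IsHermitian) (f : ℝ → ℝ) :
    cfc f A = ∑ p, f (hA.eigenvalues p) •
      vecMulVec ⇑(hA.eigenvectorBasis p) (star ⇑(hA.eigenvectorBasis p)) := by
  rw [hA.cfc_eq, IsHermitian.cfc, Unitary.conjStarAlgAut_apply]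
  ext a b
  simp [mul_apply, sum_apply, vecMulVec_apply, diagonal_apply, RCLike.real_smul_eq_coe_mul,
    mul_comm _ ((f _ : ℝ) : 𝕜), mul_assoc]

lemma posSemidef_sum_sum_smul_of_symm [Fintype ι] {P : ι → ι → Matrix n n 𝕜}
    (hP : ∀ i j, (P i j).PosSemidef) (hsymm : ∀ i j, P i j = P j i) {c : ι → ι → ℝ}
    (hc : ∀ i j, 0 ≤ c i j + c j i) : (∑ i, ∑ j, c i j • P i j).PosSemidef := by
  have hsum :
      ∑ i, ∑ j, c i j • P i j = (1 / 2 : ℝ) • ∑ i, ∑ j, (c i j + c j i) • P i j := by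
    have hswap : ∑ i, ∑ j, c j i • P i j = ∑ i, ∑ j, c i j • P i j := by
      rw [Finset.sum_comm]; simp only [hsymm]
    simp only [add_smul, Finset.sum_add_distrib, hswap]
    module
  rw [hsum]
  exact (posSemidef_sum _ fun i _ => posSemidef_sum _ fun j _ => (hP i j).smul (hc i j)).smul
    (by norm_num)

lemma sum_smul_vecMulVec_hadamard [Fintype ι] (c c' : ι → ℝ) (u : ι → n → 𝕜) :
    (∑ i, c i • vecMulVec (u i) (star (u i))) ⊙
        (∑ j, c' j • vecMulVec (u j) (star (u j))) =
      ∑ i, ∑ j, (c i * c' j) • vecMulVec (u i * u j) (star (u i * u j)) := by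
  ext a b
  simp only [hadamard_apply, sum_apply, smul_apply, vecMulVec_apply, Finset.sum_mul_sum,
    Pi.mul_apply, Pi.star_apply, star_mul', RCLike.real_smul_eq_coe_mul, RCLike.ofReal_mul]
  exact Finset.sum_congr rfl fun i _ => Finset.sum_congr rfl fun j _ => by ring

noncomputable def rankOnePowerSum [Fintype ι] (w : ι → ℝ) (u : ι → n → 𝕜) (α : ℝ) :
    Matrix n n 𝕜 :=
  ∑ i, w i ^ α • vecMulVec (u i) (star (u i))

theorem posSemidef_rankOnePowerSum_hadamard_sub [Fintype n] [Fintype ι] {w : ι → ℝ}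
    (hw : ∀ i, 0 < w i) (u : ι → n → 𝕜) {r s t : ℝ} (hr : 0 ≤ r)
    (hts : t - 1 / 2 = (1 + r) * (s - 1 / 2)) :
    (rankOnePowerSum w u t ⊙ rankOnePowerSum w u (1 - t) -
      (rankOnePowerSum w u s ⊙ rankOnePowerSum w u (1 - s) +
        r • (rankOnePowerSum w u s ⊙ rankOnePowerSum w u (1 - s) -
          rankOnePowerSum w u (1 / 2) ⊙ rankOnePowerSum w u (1 / 2)))).PosSemidef := by
  convert posSemidef_sum_sum_smul_of_symm (fun i j => posSemidef_vecMulVec_self_star (u i * u j))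
    (fun i j => by rw [mul_comm (u i)])
    (c := fun i j => w i ^ t * w j ^ (1 - t) - (w i ^ s * w j ^ (1 - s) +
      r * (w i ^ s * w j ^ (1 - s) - w i ^ (1 / 2 : ℝ) * w j ^ (1 / 2 : ℝ)))) ?_ using 1
  · simp only [rankOnePowerSum, sum_smul_vecMulVec_hadamard, sub_smul, add_smul, mul_smul,
      smul_sub, Finset.sum_sub_distrib, Finset.sum_add_distrib, Finset.smul_sum]
  · intro i j
    linear_combination heinz_mean_refinement (hw i) (hw j) hr hts

end Matrix

lemma sum_mpow_eq_rankOnePowerSum {d n : ℕ} {A : Fin n → Matrix (Fin d) (Fin d) ℂ}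
    (hA : ∀ j, (A j).IsHermitian) (α : ℝ) :
    ∑ j, mpow (A j) α = rankOnePowerSum (fun i : Fin n × Fin d => (hA i.1).eigenvalues i.2)
      (fun i => ⇑((hA i.1).eigenvectorBasis i.2)) α := by
  rw [rankOnePowerSum, Fintype.sum_prod_type]
  exact Finset.sum_congr rfl fun j _ => (hA j).cfc_eq_sum_smul_vecMulVec _

/-- Refinement of the Callebaut inequality for Hadamard products of sums of powers:
if `1 ≥ t ≥ s > 1/2` or `0 ≤ t ≤ s < 1/2`, then
`(Σ A_j^s) ∘ (Σ A_j^{1−s}) + ((t−s)/(s−1/2))((Σ A_j^s) ∘ (Σ A_j^{1−s}) − (Σ A_j^{1/2}) ∘ (Σ A_j^{1/2}))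
  ≤ (Σ A_j^t) ∘ (Σ A_j^{1−t})` in the Loewner order. -/
theorem callebaut_hadamard_powers_refinement {d n : ℕ}
    (A : Fin n → Matrix (Fin d) (Fin d) ℂ)
    (hA : ∀ j, (A j).PosDef)
    (s t : ℝ)
    (hst : (1 ≥ t ∧ t ≥ s ∧ s > 1/2) ∨ (0 ≤ t ∧ t ≤ s ∧ s < 1/2)) :
    ((∑ j, mpow (A j) t).hadamard (∑ j, mpow (A j) (1 - t)) -
      ((∑ j, mpow (A j) s).hadamard (∑ j, mpow (A j) (1 - s)) +
        ((t - s) / (s - 1/2)) •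
          ((∑ j, mpow (A j) s).hadamard (∑ j, mpow (A j) (1 - s)) -
            (∑ j, mpow (A j) (1/2)).hadamard (∑ j, mpow (A j) (1/2))))).PosSemidef := by
  have hs : s - 1 / 2 ≠ 0 := by
    rcases hst with ⟨-, -, h⟩ | ⟨-, -, h⟩ <;> linarith
  have hr : 0 ≤ (t - s) / (s - 1 / 2) := by
    rcases hst with ⟨-, hst, hs⟩ | ⟨-, hst, hs⟩
    · exact div_nonneg (by linarith) (by linarith)
    · exact div_nonneg_of_nonpos (by linarith) (by linarith)
  have hts : t - 1 / 2 = (1 + (t - s) / (s - 1 / 2)) * (s - 1 / 2) := by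
    rw [add_mul, one_mul, div_mul_cancel₀ _ hs]
    ring
  simp only [sum_mpow_eq_rankOnePowerSum fun j => (hA j).isHermitian]
  have hgap := posSemidef_rankOnePowerSum_hadamard_sub
    (fun i : Fin n × Fin d => (hA i.1).eigenvalues_pos i.2)
    (fun i => ⇑((hA i.1).isHermitian.eigenvectorBasis i.2)) hr hts
  exact hgap
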